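/- arXiv:1601.03592 — 2 statements merged into one kernel-verified Lean document; each statement's English description precedes it below -/
import Mathlib

section
/- Suppose $u,h:[\tau,\infty)\to[0,\infty)$ with $u$ piecewise continuous, $h$ continuous, and $u(t)\le h(t) + \int_\tau^t a\, u(s)\,ds + \sum_{\tau<\theta_k<t} b\, u(\theta_k)$ for all $t\ge\tau$, where $a,b\ge 0$ and $\{\theta_k\}$ is strictly increasing with gaps $\ge\theta>0$. Then $u(t)\le h(t) + \int_\tau^t a(1+b)^{i((s,t))}e^{a(t-s)}h(s)\,ds + \sum_{\tau<\theta_k<t} b(1+b)^{i((\theta_k,t))}e^{a(t-\theta_k)}h(\theta_k)$, where $i((s,t))$ counts terms $\theta_k\in(s,t)$. -/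
/-!
Let `μ = a λ + b ∑ₖ δ_{θₖ}`. The hypothesis says `u ≤ h + T u` with `T φ (t) = ∫_{(τ,t)} φ dμ`,
and the kernel `K s t = (1 + b) ^ i((s,t)) e^{a (t - s)}` solves
`K s t = 1 + ∫_{(s,t)} K s r dμ(r)`: between impulses both sides grow like `e^{a t}`, and at an
impulse both jump by the factor `1 + b`. Fubini then shows that
`v t = h t + ∫_{(τ,t)} K r t h r dμ(r)` solves `v = h + T v` exactly, so `φ = u - v` satisfies
`φ ≤ T φ`. Finally `φ ≤ 0`: the kernel `w` of the measure `2μ` satisfies `T w ≤ w / 2`, so any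
bound `φ ≤ C w` improves to `φ ≤ (C / 2) w`.
-/

open MeasureTheory Set

noncomputable section

namespace ImpulsiveGronwall

theorem tsum_subtype_eq_finsum_mem {ι M : Type*} [AddCommMonoid M] [TopologicalSpace M]
    {s : Set ι} (hs : s.Finite) (f : ι → M) : ∑' x : s, f x = ∑ᶠ x ∈ s, f x := by
  rw [tsum_subtype, finsum_mem_def]
  exact tsum_eq_finsum (hs.subset support_indicator_subset)

theorem integral_mul_exp_mul_sub (a c x y : ℝ) :
    ∫ s in x..y, a * Real.exp (a * (s - c)) = Real.exp (a * (y - c)) - Real.exp (a * (x - c)) := by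
  refine intervalIntegral.integral_eq_sub_of_hasDerivAt (f := fun s => Real.exp (a * (s - c)))
    (fun s _ => ?_)
    ((by fun_prop : Continuous fun s => a * Real.exp (a * (s - c))).intervalIntegrable _ _)
  simpa [mul_comm] using (((hasDerivAt_id s).sub_const c).const_mul a).exp

theorem ae_mem_prod_restrict {α β : Type*} [MeasurableSpace α] [MeasurableSpace β]
    {μ : Measure α} {ν : Measure β} [SFinite μ] [SFinite ν] {s : Set α} {t : Set β}
    (hs : MeasurableSet s) (ht : MeasurableSet t) :
    ∀ᵐ p ∂(μ.restrict s).prod (ν.restrict t), p ∈ s ×ˢ t := by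
  rw [Measure.prod_restrict]
  exact ae_restrict_mem (hs.prod ht)

section SumDirac

variable {ι X : Type*} [Countable ι] [MeasurableSpace X] [MeasurableSingletonClass X] {x : ι → X}
  {s : Set X}

theorem setIntegral_sum_dirac (hfin : (x ⁻¹' s).Finite) (hs : MeasurableSet s) (f : X → ℝ) :
    ∫ y in s, f y ∂Measure.sum (fun i => Measure.dirac (x i)) = ∑ᶠ i ∈ x ⁻¹' s, f (x i) := by
  rw [← integral_indicator hs, ← tsum_subtype_eq_finsum_mem hfin,
    tsum_subtype (x ⁻¹' s) (fun i => f (x i))]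
  refine Eq.trans ?_ (tsum_congr fun i => (indicator_comp_right x).symm)
  simpa using integral_sum_dirac (f := s.indicator f) (x := x) (c := fun _ => 1) (by simp)

theorem integrableOn_sum_dirac (hfin : (x ⁻¹' s).Finite) (hs : MeasurableSet s) (f : X → ℝ) :
    IntegrableOn f s (Measure.sum fun i => Measure.dirac (x i)) := by
  rw [← integrable_indicator_iff hs]
  simpa using integrable_sum_dirac (f := s.indicator f) (x := x) (c := fun _ => 1) (by simp)
    (summable_of_hasFiniteSupport <| hfin.subset fun i hi =>
      by_contra fun h => hi (by simp [indicator_of_notMem (show x i ∉ s from h)]))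

end SumDirac

section ImpulseTimes

variable {θ₀ : ℝ} {θs : ℤ → ℝ}

theorem mul_sub_le_sub_of_gap (hgap : ∀ k, θ₀ ≤ θs (k + 1) - θs k) {j k : ℤ} (hjk : j ≤ k) :
    θ₀ * (k - j) ≤ θs k - θs j := by
  induction k, hjk using Int.leInduction with
  | base => simp
  | succ k _ ih => push_cast; linarith [hgap k]

theorem finite_preimage_of_gap (hθ₀ : 0 < θ₀) (hgap : ∀ k, θ₀ ≤ θs (k + 1) - θs k)
    {s : Set ℝ} (hs : Bornology.IsBounded s) : (θs ⁻¹' s).Finite := by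
  obtain ⟨R, hR⟩ := hs.subset_closedBall (θs 0)
  have hbound : ∀ k ∈ θs ⁻¹' s, θ₀ * |(k : ℝ)| ≤ R := by
    intro k hk
    have hdist : |θs k - θs 0| ≤ R := mem_closedBall_iff_norm.1 (hR hk)
    rcases le_total 0 k with hk0 | hk0
    · have := mul_sub_le_sub_of_gap hgap hk0
      rw [abs_of_nonneg (by exact_mod_cast hk0)]
      push_cast at this
      linarith [le_abs_self (θs k - θs 0)]
    · have := mul_sub_le_sub_of_gap hgap hk0
      rw [abs_of_nonpos (by exact_mod_cast hk0)]
      push_cast at this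
      linarith [neg_abs_le (θs k - θs 0)]
  refine (finite_Icc (-⌈R / θ₀⌉) ⌈R / θ₀⌉).subset fun k hk => ?_
  have : |(k : ℝ)| ≤ ⌈R / θ₀⌉ :=
    ((le_div_iff₀' hθ₀).2 (hbound k hk)).trans (Int.le_ceil _)
  rw [mem_Icc, ← abs_le]
  exact_mod_cast this

theorem strictMono_of_gap (hθ₀ : 0 < θ₀) (hgap : ∀ k, θ₀ ≤ θs (k + 1) - θs k) : StrictMono θs :=
  strictMono_int_of_lt_succ fun k => by linarith [hgap k]

theorem exists_last_mem_preimage_Ioo (hθs : StrictMono θs) {σ t : ℝ}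
    (hfin : (θs ⁻¹' Ioo σ t).Finite) (hne : (θs ⁻¹' Ioo σ t).Nonempty) :
    ∃ k ∈ θs ⁻¹' Ioo σ t, θs ⁻¹' Ioo σ t = insert k (θs ⁻¹' Ioo σ (θs k)) ∧
      ∀ s ∈ Ioc (θs k) t, θs ⁻¹' Ioo σ s = θs ⁻¹' Ioo σ t := by
  obtain ⟨k, hk, hmax⟩ := exists_max_image _ θs hfin hne
  refine ⟨k, hk, ?_, fun s hs => ?_⟩
  · ext j
    simp only [mem_preimage, mem_Ioo, mem_insert_iff]
    constructor
    · intro hj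
      rcases (hmax j hj).lt_or_eq with hlt | heq
      · exact Or.inr ⟨hj.1, hlt⟩
      · exact Or.inl (hθs.injective heq)
    · rintro (rfl | hj)
      · exact hk
      · exact ⟨hj.1, hj.2.trans hk.2⟩
  · ext j
    simp only [mem_preimage, mem_Ioo]
    exact ⟨fun hj => ⟨hj.1, hj.2.trans_le hs.2⟩, fun hj => ⟨hj.1, (hmax j hj).trans_lt hs.1⟩⟩

end ImpulseTimes

section Volterra

variable {μ : Measure ℝ}

theorem nonpos_of_le_setIntegral_Ioo {σ T q : ℝ} {φ w : ℝ → ℝ} (hq₀ : 0 ≤ q) (hq₁ : q < 1)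
    (hφ : IntegrableOn φ (Ioo σ T) μ) (hw : IntegrableOn w (Ioo σ T) μ)
    (hw₁ : ∀ t ∈ Icc σ T, 1 ≤ w t) (hwq : ∀ t ∈ Icc σ T, ∫ s in Ioo σ t, w s ∂μ ≤ q * w t)
    (hφw : ∀ t ∈ Icc σ T, φ t ≤ ∫ s in Ioo σ t, φ s ∂μ) :
    ∀ t ∈ Icc σ T, φ t ≤ 0 := by
  set C := ∫ s in Ioo σ T, |φ s| ∂μ
  have hC : 0 ≤ C := setIntegral_nonneg measurableSet_Ioo fun _ _ => abs_nonneg _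
  have hφabs : IntegrableOn (fun s => |φ s|) (Ioo σ T) μ := hφ.abs
  have hsub : ∀ t ∈ Icc σ T, Ioo σ t ⊆ Ioo σ T := fun t ht => Ioo_subset_Ioo_right ht.2
  have key : ∀ n : ℕ, ∀ t ∈ Icc σ T, φ t ≤ C * q ^ n * w t := by
    intro n
    induction n with
    | zero =>
      intro t ht
      calc φ t ≤ ∫ s in Ioo σ t, φ s ∂μ := hφw t ht
        _ ≤ ∫ s in Ioo σ t, |φ s| ∂μ :=
          setIntegral_mono_on (hφ.mono_set (hsub t ht)) (hφabs.mono_set (hsub t ht))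
            measurableSet_Ioo fun s _ => le_abs_self _
        _ ≤ C := setIntegral_mono_set hφabs (ae_of_all _ fun s => abs_nonneg _)
          (hsub t ht).eventuallyLE
        _ ≤ C * q ^ 0 * w t := by simpa using le_mul_of_one_le_right hC (hw₁ t ht)
    | succ n ih =>
      intro t ht
      calc φ t ≤ ∫ s in Ioo σ t, φ s ∂μ := hφw t ht
        _ ≤ ∫ s in Ioo σ t, C * q ^ n * w s ∂μ :=
          setIntegral_mono_on (hφ.mono_set (hsub t ht)) ((hw.mono_set (hsub t ht)).const_mul _)
            measurableSet_Ioo fun s hs => ih s (Ioo_subset_Icc_self (hsub t ht hs))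
        _ = C * q ^ n * ∫ s in Ioo σ t, w s ∂μ := integral_const_mul _ _
        _ ≤ C * q ^ n * (q * w t) := mul_le_mul_of_nonneg_left (hwq t ht) (by positivity)
        _ = C * q ^ (n + 1) * w t := by ring
  intro t ht
  have hlim : Filter.Tendsto (fun n : ℕ => C * q ^ n * w t) Filter.atTop (nhds 0) := by
    simpa using ((tendsto_pow_atTop_nhds_zero_of_lt_one hq₀ hq₁).const_mul C).mul_const (w t)
  exact ge_of_tendsto' hlim fun n => key n t ht

variable {K : ℝ → ℝ → ℝ} {h : ℝ → ℝ} {τ t : ℝ}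

theorem integral_triangle_slice_left {s : ℝ} (hs : s ≤ t) :
    ∫ r in Ioo τ t, {p : ℝ × ℝ | p.2 < p.1}.indicator (fun p => K p.2 p.1 * h p.2) (s, r) ∂μ =
      ∫ r in Ioo τ s, K r s * h r ∂μ := by
  change ∫ r in Ioo τ t, (Iio s).indicator (fun r => K r s * h r) r ∂μ = _
  rw [integral_indicator measurableSet_Iio, Measure.restrict_restrict measurableSet_Iio,
    Iio_inter_Ioo, min_eq_left hs]

theorem integral_triangle_slice_right {r : ℝ} (hr : τ ≤ r) :
    ∫ s in Ioo τ t, {p : ℝ × ℝ | p.2 < p.1}.indicator (fun p => K p.2 p.1 * h p.2) (s, r) ∂μ =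
      h r * ∫ s in Ioo r t, K r s ∂μ := by
  change ∫ s in Ioo τ t, (Ioi r).indicator (fun s => K r s * h r) s ∂μ = _
  rw [integral_indicator measurableSet_Ioi, Measure.restrict_restrict measurableSet_Ioi,
    Ioi_inter_Ioo, max_eq_left hr, integral_mul_const, mul_comm]

variable [SFinite μ]

theorem integrableOn_setIntegral_Ioo_kernel
    (hK : Integrable ({p : ℝ × ℝ | p.2 < p.1}.indicator fun p => K p.2 p.1 * h p.2)
      ((μ.restrict (Ioo τ t)).prod (μ.restrict (Ioo τ t)))) :
    IntegrableOn (fun s => ∫ r in Ioo τ s, K r s * h r ∂μ) (Ioo τ t) μ :=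
  hK.integral_prod_left.congr <| ae_restrict_of_forall_mem measurableSet_Ioo fun _ hs =>
    integral_triangle_slice_left hs.2.le

theorem setIntegral_Ioo_resolvent
    (hK : Integrable ({p : ℝ × ℝ | p.2 < p.1}.indicator fun p => K p.2 p.1 * h p.2)
      ((μ.restrict (Ioo τ t)).prod (μ.restrict (Ioo τ t))))
    (hh : IntegrableOn h (Ioo τ t) μ)
    (hK₁ : ∀ r ∈ Ioo τ t, K r t = 1 + ∫ s in Ioo r t, K r s ∂μ) :
    ∫ s in Ioo τ t, (h s + ∫ r in Ioo τ s, K r s * h r ∂μ) ∂μ = ∫ r in Ioo τ t, K r t * h r ∂μ := by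
  set F := {p : ℝ × ℝ | p.2 < p.1}.indicator fun p => K p.2 p.1 * h p.2
  have hslice : ∀ r ∈ Ioo τ t, ∫ s in Ioo τ t, F (s, r) ∂μ = h r * (K r t - 1) := fun r hr => by
    rw [integral_triangle_slice_right hr.1.le, hK₁ r hr]; ring
  have hint : IntegrableOn (fun r => h r * (K r t - 1)) (Ioo τ t) μ :=
    hK.integral_prod_right.congr <| ae_restrict_of_forall_mem measurableSet_Ioo hslice
  calc ∫ s in Ioo τ t, (h s + ∫ r in Ioo τ s, K r s * h r ∂μ) ∂μ
      = (∫ s in Ioo τ t, h s ∂μ) + ∫ s in Ioo τ t, ∫ r in Ioo τ t, F (s, r) ∂μ ∂μ := by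
        rw [integral_add hh (integrableOn_setIntegral_Ioo_kernel hK)]
        congr 1
        exact setIntegral_congr_fun measurableSet_Ioo fun s hs =>
          (integral_triangle_slice_left hs.2.le).symm
    _ = (∫ r in Ioo τ t, h r ∂μ) + ∫ r in Ioo τ t, h r * (K r t - 1) ∂μ := by
        rw [integral_integral_swap (f := fun s r => F (s, r)) hK,
          setIntegral_congr_fun measurableSet_Ioo hslice]
    _ = ∫ r in Ioo τ t, K r t * h r ∂μ := by
        rw [← integral_add hh hint]
        congr 1 with r
        ring

end Volterra

def impulseMeasure (a b : ℝ) (θs : ℤ → ℝ) : Measure ℝ :=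
  ENNReal.ofReal a • volume + ENNReal.ofReal b • Measure.sum fun k => Measure.dirac (θs k)

instance (a b : ℝ) (θs : ℤ → ℝ) : SFinite (impulseMeasure a b θs) := by
  unfold impulseMeasure
  infer_instance

section ImpulseMeasure

variable {a b α β : ℝ} {θs : ℤ → ℝ} {f : ℝ → ℝ}

theorem integrableOn_impulseMeasure (hfin : (θs ⁻¹' Ioo α β).Finite)
    (hf : IntegrableOn f (Ioc α β)) : IntegrableOn f (Ioo α β) (impulseMeasure a b θs) := by
  rw [IntegrableOn, impulseMeasure, Measure.restrict_add, integrable_add_measure,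
    Measure.restrict_smul, Measure.restrict_smul]
  exact ⟨(hf.mono_set Ioo_subset_Ioc_self).smul_measure ENNReal.ofReal_ne_top,
    (integrableOn_sum_dirac hfin measurableSet_Ioo f).smul_measure ENNReal.ofReal_ne_top⟩

theorem setIntegral_impulseMeasure (ha : 0 ≤ a) (hb : 0 ≤ b) (hfin : (θs ⁻¹' Ioo α β).Finite)
    (hf : IntegrableOn f (Ioc α β)) :
    ∫ x in Ioo α β, f x ∂impulseMeasure a b θs =
      (∫ x in Ioc α β, a * f x) + ∑ᶠ k ∈ θs ⁻¹' Ioo α β, b * f (θs k) := by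
  have hμ := integrableOn_impulseMeasure (a := a) (b := b) hfin hf
  rw [IntegrableOn, impulseMeasure, Measure.restrict_add, integrable_add_measure] at hμ
  rw [impulseMeasure, Measure.restrict_add, integral_add_measure hμ.1 hμ.2, Measure.restrict_smul,
    Measure.restrict_smul, integral_smul_measure, integral_smul_measure,
    setIntegral_sum_dirac hfin measurableSet_Ioo, integral_const_mul,
    integral_Ioc_eq_integral_Ioo, ENNReal.toReal_ofReal ha, ENNReal.toReal_ofReal hb, smul_eq_mul,
    smul_eq_mul, mul_finsum_mem]

theorem impulseMeasure_Ioo_ne_top (hfin : (θs ⁻¹' Ioo α β).Finite) :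
    impulseMeasure a b θs (Ioo α β) ≠ ⊤ := by
  have h := integrableOn_impulseMeasure (a := a) (b := b) hfin
    (integrableOn_const (C := (1 : ℝ)) measure_Ioc_lt_top.ne)
  rw [integrableOn_const_iff] at h
  simpa [lt_top_iff_ne_top] using h

theorem impulseMeasure_mul {c : ℝ} (hc : 0 ≤ c) :
    impulseMeasure (c * a) (c * b) θs = ENNReal.ofReal c • impulseMeasure a b θs := by
  simp only [impulseMeasure, ENNReal.ofReal_mul hc, smul_add, mul_smul]

end ImpulseMeasure

def impulseKernel (a b : ℝ) (θs : ℤ → ℝ) (s t : ℝ) : ℝ :=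
  (1 + b) ^ (θs ⁻¹' Ioo s t).ncard * Real.exp (a * (t - s))

section Kernel

variable {a b : ℝ} {θs : ℤ → ℝ}

theorem one_le_impulseKernel (ha : 0 ≤ a) (hb : 0 ≤ b) {s t : ℝ} (hst : s ≤ t) :
    1 ≤ impulseKernel a b θs s t :=
  one_le_mul_of_one_le_of_one_le (one_le_pow₀ (by linarith))
    (Real.one_le_exp (mul_nonneg ha (sub_nonneg.2 hst)))

theorem impulseKernel_le_impulseKernel (hfin : ∀ α β, (θs ⁻¹' Ioo α β).Finite) (ha : 0 ≤ a)
    (hb : 0 ≤ b) {σ s t t' : ℝ} (hs : σ ≤ s) (ht : t ≤ t') :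
    impulseKernel a b θs s t ≤ impulseKernel a b θs σ t' :=
  mul_le_mul (pow_le_pow_right₀ (by linarith)
      (ncard_le_ncard (preimage_mono (Ioo_subset_Ioo hs ht)) (hfin σ t')))
    (Real.exp_le_exp.2 (by nlinarith)) (Real.exp_nonneg _) (by positivity)

theorem monotone_impulseKernel (hfin : ∀ α β, (θs ⁻¹' Ioo α β).Finite) (ha : 0 ≤ a) (hb : 0 ≤ b)
    (s : ℝ) : Monotone (impulseKernel a b θs s) := fun _ _ ht =>
  impulseKernel_le_impulseKernel hfin ha hb le_rfl ht

theorem antitone_impulseKernel (hfin : ∀ α β, (θs ⁻¹' Ioo α β).Finite) (ha : 0 ≤ a) (hb : 0 ≤ b)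
    (t : ℝ) : Antitone fun s => impulseKernel a b θs s t := fun _ _ hs =>
  impulseKernel_le_impulseKernel hfin ha hb hs le_rfl

theorem integrableOn_impulseKernel_right (hfin : ∀ α β, (θs ⁻¹' Ioo α β).Finite) (ha : 0 ≤ a)
    (hb : 0 ≤ b) (σ α β : ℝ) : IntegrableOn (impulseKernel a b θs σ) (Ioc α β) :=
  (((monotone_impulseKernel hfin ha hb σ).monotoneOn _).integrableOn_isCompact
    isCompact_Icc).mono_set Ioc_subset_Icc_self

theorem integrableOn_impulseKernel_left_mul (hfin : ∀ α β, (θs ⁻¹' Ioo α β).Finite) (ha : 0 ≤ a)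
    (hb : 0 ≤ b) {h : ℝ → ℝ} (hh : Continuous h) (t α β : ℝ) :
    IntegrableOn (fun s => impulseKernel a b θs s t * h s) (Ioc α β) :=
  ((((antitone_impulseKernel hfin ha hb t).antitoneOn _).integrableOn_isCompact
    isCompact_Icc).mul_continuousOn hh.continuousOn isCompact_Icc).mono_set Ioc_subset_Icc_self

theorem integral_impulseKernel_of_ncard_eq {σ x y : ℝ} {m : ℕ} (hxy : x ≤ y)
    (hm : ∀ s ∈ Ioc x y, (θs ⁻¹' Ioo σ s).ncard = m) :
    ∫ s in x..y, a * impulseKernel a b θs σ s =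
      (1 + b) ^ m * (Real.exp (a * (y - σ)) - Real.exp (a * (x - σ))) := by
  rw [intervalIntegral.integral_of_le hxy, setIntegral_congr_fun measurableSet_Ioc
      (g := fun s => (1 + b) ^ m * (a * Real.exp (a * (s - σ))))
      fun s hs => by simp only [impulseKernel, hm s hs]; ring,
    integral_const_mul, ← intervalIntegral.integral_of_le hxy, integral_mul_exp_mul_sub]

theorem impulseKernel_eq_one_add (hfin : ∀ α β, (θs ⁻¹' Ioo α β).Finite) (hθs : StrictMono θs)
    (ha : 0 ≤ a) (hb : 0 ≤ b) {σ t : ℝ} (hσt : σ ≤ t) :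
    impulseKernel a b θs σ t = 1 + (∫ s in σ..t, a * impulseKernel a b θs σ s) +
      ∑ᶠ k ∈ θs ⁻¹' Ioo σ t, b * impulseKernel a b θs σ (θs k) := by
  induction hn : (θs ⁻¹' Ioo σ t).ncard generalizing t with
  | zero =>
    have hm : ∀ s ∈ Ioc σ t, (θs ⁻¹' Ioo σ s).ncard = 0 := fun s hs =>
      Nat.eq_zero_of_le_zero <|
        hn ▸ ncard_le_ncard (preimage_mono (Ioo_subset_Ioo_right hs.2)) (hfin σ t)
    rw [integral_impulseKernel_of_ncard_eq hσt hm, (ncard_eq_zero (hfin σ t)).1 hn,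
      finsum_mem_empty, impulseKernel, hn]
    simp
  | succ n ih =>
    obtain ⟨k, hk, hinsert, hlast⟩ := exists_last_mem_preimage_Ioo hθs (hfin σ t)
      ((ncard_pos (hfin σ t)).1 (hn ▸ n.succ_pos))
    have hnot : k ∉ θs ⁻¹' Ioo σ (θs k) := fun h => lt_irrefl _ h.2
    have hn' : (θs ⁻¹' Ioo σ (θs k)).ncard = n := by
      rw [hinsert, ncard_insert_of_notMem hnot (hfin _ _)] at hn
      omega
    have hKk : impulseKernel a b θs σ (θs k) = (1 + b) ^ n * Real.exp (a * (θs k - σ)) := by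
      rw [impulseKernel, hn']
    have hint : ∀ x y, IntervalIntegrable (fun s => a * impulseKernel a b θs σ s) volume x y :=
      fun _ _ => (monotone_impulseKernel hfin ha hb σ).intervalIntegrable.const_mul a
    rw [← intervalIntegral.integral_add_adjacent_intervals (hint σ (θs k)) (hint (θs k) t),
      integral_impulseKernel_of_ncard_eq hk.2.le fun s hs => by rw [hlast s hs, hn], hinsert,
      finsum_mem_insert _ hnot (hfin _ _), impulseKernel, hn]
    linear_combination ih (t := θs k) hk.1.le hn' - (1 + b) * hKk

theorem impulseKernel_eq_one_add_setIntegral (hfin : ∀ α β, (θs ⁻¹' Ioo α β).Finite)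
    (hθs : StrictMono θs) (ha : 0 ≤ a) (hb : 0 ≤ b) {σ t : ℝ} (hσt : σ ≤ t) :
    impulseKernel a b θs σ t =
      1 + ∫ s in Ioo σ t, impulseKernel a b θs σ s ∂impulseMeasure a b θs := by
  rw [setIntegral_impulseMeasure ha hb (hfin σ t)
      (integrableOn_impulseKernel_right hfin ha hb σ σ t),
    ← intervalIntegral.integral_of_le hσt, ← add_assoc]
  exact impulseKernel_eq_one_add hfin hθs ha hb hσt

theorem setIntegral_impulseKernel_two_mul_le (hfin : ∀ α β, (θs ⁻¹' Ioo α β).Finite)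
    (hθs : StrictMono θs) (ha : 0 ≤ a) (hb : 0 ≤ b) {σ t : ℝ} (hσt : σ ≤ t) :
    ∫ s in Ioo σ t, impulseKernel (2 * a) (2 * b) θs σ s ∂impulseMeasure a b θs ≤
      1 / 2 * impulseKernel (2 * a) (2 * b) θs σ t := by
  have h := impulseKernel_eq_one_add_setIntegral hfin hθs (by positivity) (by positivity) hσt
    (a := 2 * a) (b := 2 * b)
  rw [impulseMeasure_mul zero_le_two, Measure.restrict_smul, integral_smul_measure,
    ENNReal.toReal_ofReal zero_le_two, smul_eq_mul] at h
  linarith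

-- Separating the variables makes the kernel jointly measurable on the triangle `τ ≤ r < s`.
theorem impulseKernel_eq_div (hfin : ∀ α β, (θs ⁻¹' Ioo α β).Finite) (hb : 0 ≤ b) {τ r s : ℝ}
    (hτr : τ ≤ r) (hrs : r < s) :
    impulseKernel a b θs r s = (1 + b) ^ (θs ⁻¹' Ioo τ s).ncard * Real.exp (a * s) /
      ((1 + b) ^ (θs ⁻¹' Ioc τ r).ncard * Real.exp (a * r)) := by
  have hsub : θs ⁻¹' Ioc τ r ⊆ θs ⁻¹' Ioo τ s := preimage_mono (Ioc_subset_Ioo_right hrs)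
  have hdiff : θs ⁻¹' Ioo r s = θs ⁻¹' Ioo τ s \ θs ⁻¹' Ioc τ r := by
    ext k
    simp only [mem_preimage, mem_Ioo, mem_sdiff, mem_Ioc, not_and, not_le]
    exact ⟨fun hk => ⟨⟨hτr.trans_lt hk.1, hk.2⟩, fun _ => hk.1⟩,
      fun hk => ⟨hk.2 hk.1.1, hk.1.2⟩⟩
  rw [impulseKernel, hdiff, ncard_sdiff hsub ((hfin τ s).subset hsub),
    pow_sub₀ _ (by linarith : (1 + b) ≠ 0) (ncard_le_ncard hsub (hfin τ s)), mul_sub, Real.exp_sub]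
  field_simp

theorem aestronglyMeasurable_impulseKernel_triangle (hfin : ∀ α β, (θs ⁻¹' Ioo α β).Finite)
    (hb : 0 ≤ b) {h : ℝ → ℝ} (hh : Measurable h) {μ : Measure ℝ} [SFinite μ] (τ t : ℝ) :
    AEStronglyMeasurable
      ({p : ℝ × ℝ | p.2 < p.1}.indicator fun p => impulseKernel a b θs p.2 p.1 * h p.2)
      ((μ.restrict (Ioo τ t)).prod (μ.restrict (Ioo τ t))) := by
  have hN : Measurable fun s => (θs ⁻¹' Ioo τ s).ncard := Monotone.measurable fun _ s' hs =>
    ncard_le_ncard (preimage_mono (Ioo_subset_Ioo_right hs)) (hfin τ s')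
  have hM : Measurable fun r => (θs ⁻¹' Ioc τ r).ncard := Monotone.measurable fun _ r' hr =>
    ncard_le_ncard (preimage_mono (Ioc_subset_Ioc_right hr))
      ((hfin τ (r' + 1)).subset (preimage_mono (Ioc_subset_Ioo_right (lt_add_one r'))))
  have hA := ((measurable_const (a := 1 + b)).pow hN).mul
    (by fun_prop : Measurable fun s => Real.exp (a * s))
  have hB := ((measurable_const (a := 1 + b)).pow hM).mul
    (by fun_prop : Measurable fun r => Real.exp (a * r))
  refine ((((hA.comp measurable_fst).div (hB.comp measurable_snd)).mul
    (hh.comp measurable_snd)).indicator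
      (measurableSet_lt measurable_snd measurable_fst)).aestronglyMeasurable.congr ?_
  filter_upwards [ae_mem_prod_restrict measurableSet_Ioo measurableSet_Ioo] with p hp
  by_cases hlt : p.2 < p.1
  · simp only [indicator_of_mem (show p ∈ {p : ℝ × ℝ | p.2 < p.1} from hlt),
      impulseKernel_eq_div hfin hb hp.2.1.le hlt]
    rfl
  · simp only [indicator_of_notMem (show p ∉ {p : ℝ × ℝ | p.2 < p.1} from hlt)]

theorem integrable_impulseKernel_triangle (hfin : ∀ α β, (θs ⁻¹' Ioo α β).Finite) (ha : 0 ≤ a)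
    (hb : 0 ≤ b) {h : ℝ → ℝ} (hh : Continuous h) (τ t : ℝ) :
    Integrable ({p : ℝ × ℝ | p.2 < p.1}.indicator fun p => impulseKernel a b θs p.2 p.1 * h p.2)
      (((impulseMeasure a b θs).restrict (Ioo τ t)).prod
        ((impulseMeasure a b θs).restrict (Ioo τ t))) := by
  have : IsFiniteMeasure ((impulseMeasure a b θs).restrict (Ioo τ t)) :=
    isFiniteMeasure_restrict.2 (impulseMeasure_Ioo_ne_top (hfin τ t))
  obtain ⟨C, hC⟩ := isCompact_Icc.exists_bound_of_continuousOn (hh.continuousOn (s := Icc τ t))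
  refine .of_bound (aestronglyMeasurable_impulseKernel_triangle hfin hb hh.measurable τ t)
    (impulseKernel a b θs τ t * C) ?_
  filter_upwards [ae_mem_prod_restrict measurableSet_Ioo measurableSet_Ioo] with p hp
  have hK := impulseKernel_le_impulseKernel hfin ha hb (θs := θs) hp.2.1.le hp.1.2.le
  have hK₀ := zero_le_one.trans (one_le_impulseKernel ha hb (θs := θs) (hp.2.1.trans hp.2.2).le)
  have hhp : ‖h p.2‖ ≤ C := hC p.2 (Ioo_subset_Icc_self hp.2)
  by_cases hlt : p.2 < p.1
  · rw [indicator_of_mem (show p ∈ {p : ℝ × ℝ | p.2 < p.1} from hlt), norm_mul,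
      Real.norm_of_nonneg (zero_le_one.trans (one_le_impulseKernel ha hb hlt.le))]
    exact mul_le_mul hK hhp (norm_nonneg _) hK₀
  · rw [indicator_of_notMem (show p ∉ {p : ℝ × ℝ | p.2 < p.1} from hlt), norm_zero]
    exact mul_nonneg hK₀ ((norm_nonneg _).trans hhp)

end Kernel

def impulsiveGronwallBound (a b : ℝ) (θs : ℤ → ℝ) (τ : ℝ) (h : ℝ → ℝ) (t : ℝ) : ℝ :=
  h t + ∫ r in Ioo τ t, impulseKernel a b θs r t * h r ∂impulseMeasure a b θs

section Bound

variable {a b : ℝ} {θs : ℤ → ℝ} {h : ℝ → ℝ}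

theorem integrableOn_impulsiveGronwallBound (hfin : ∀ α β, (θs ⁻¹' Ioo α β).Finite) (ha : 0 ≤ a)
    (hb : 0 ≤ b) (hh : Continuous h) (τ t : ℝ) :
    IntegrableOn (impulsiveGronwallBound a b θs τ h) (Ioo τ t) (impulseMeasure a b θs) :=
  (integrableOn_impulseMeasure (hfin τ t) hh.integrableOn_Ioc).add
    (integrableOn_setIntegral_Ioo_kernel (integrable_impulseKernel_triangle hfin ha hb hh τ t))

theorem impulsiveGronwallBound_eq (hfin : ∀ α β, (θs ⁻¹' Ioo α β).Finite) (hθs : StrictMono θs)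
    (ha : 0 ≤ a) (hb : 0 ≤ b) (hh : Continuous h) (τ t : ℝ) :
    impulsiveGronwallBound a b θs τ h t =
      h t + ∫ s in Ioo τ t, impulsiveGronwallBound a b θs τ h s ∂impulseMeasure a b θs := by
  simp only [impulsiveGronwallBound]
  rw [setIntegral_Ioo_resolvent (integrable_impulseKernel_triangle hfin ha hb hh τ t)
    (integrableOn_impulseMeasure (hfin τ t) hh.integrableOn_Ioc)
    fun r hr => impulseKernel_eq_one_add_setIntegral hfin hθs ha hb hr.2.le]

theorem le_impulsiveGronwallBound (hfin : ∀ α β, (θs ⁻¹' Ioo α β).Finite) (hθs : StrictMono θs)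
    (ha : 0 ≤ a) (hb : 0 ≤ b) (hh : Continuous h) {u : ℝ → ℝ} {τ : ℝ}
    (hu : ∀ t, IntegrableOn u (Ioo τ t) (impulseMeasure a b θs))
    (huh : ∀ t, τ ≤ t → u t ≤ h t + ∫ s in Ioo τ t, u s ∂impulseMeasure a b θs)
    {t : ℝ} (ht : τ ≤ t) :
    u t ≤ impulsiveGronwallBound a b θs τ h t := by
  set v := impulsiveGronwallBound a b θs τ h
  have hv := integrableOn_impulsiveGronwallBound hfin ha hb hh τ
  have hφ : ∀ s ∈ Icc τ t, u s - v s ≤ ∫ r in Ioo τ s, (u r - v r) ∂impulseMeasure a b θs := by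
    intro s hs
    rw [integral_sub (hu s) (hv s)]
    linarith [huh s hs.1, impulsiveGronwallBound_eq hfin hθs ha hb hh τ s]
  have ha₂ : 0 ≤ 2 * a := by positivity
  have hb₂ : 0 ≤ 2 * b := by positivity
  have := nonpos_of_le_setIntegral_Ioo (φ := fun s => u s - v s) (by norm_num) (by norm_num)
    ((hu t).sub (hv t))
    (integrableOn_impulseMeasure (hfin τ t) (integrableOn_impulseKernel_right hfin ha₂ hb₂ τ τ t))
    (fun s hs => one_le_impulseKernel ha₂ hb₂ hs.1)
    (fun s hs => setIntegral_impulseKernel_two_mul_le hfin hθs ha hb hs.1) hφ t ⟨ht, le_rfl⟩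
  linarith

end Bound

end ImpulsiveGronwall

end

open ImpulsiveGronwall

theorem stmt_12_general (a b θ0 τ : ℝ) (ha : 0 ≤ a) (hb : 0 ≤ b) (hθ0 : 0 < θ0)
    (θs : ℤ → ℝ) (hgap : ∀ k : ℤ, θ0 ≤ θs (k + 1) - θs k)
    (u h : ℝ → ℝ) (hhc : Continuous h)
    (huint : ∀ t, IntegrableOn u (Set.Ioc τ t))
    (hineq : ∀ t, τ ≤ t → u t ≤ h t + (∫ s in Set.Ioc τ t, a * u s) +
      ∑' k : {k : ℤ // τ < θs k ∧ θs k < t}, b * u (θs k)) :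
    ∀ t, τ ≤ t → u t ≤ h t +
      (∫ s in Set.Ioc τ t,
        a * (1 + b) ^ ({j : ℤ | s < θs j ∧ θs j < t}.ncard) * Real.exp (a * (t - s)) * h s) +
      ∑' k : {k : ℤ // τ < θs k ∧ θs k < t},
        b * (1 + b) ^ ({j : ℤ | θs k < θs j ∧ θs j < t}.ncard) *
          Real.exp (a * (t - θs k)) * h (θs k) := by
  intro t ht
  have hfin : ∀ α β, (θs ⁻¹' Ioo α β).Finite := fun _ _ =>
    finite_preimage_of_gap hθ0 hgap (Metric.isBounded_Ioo _ _)
  have hsplit : ∀ {t} {f : ℝ → ℝ}, IntegrableOn f (Ioc τ t) →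
      (∫ s in Ioc τ t, a * f s) + ∑' k : {k : ℤ // τ < θs k ∧ θs k < t}, b * f (θs k) =
        ∫ s in Ioo τ t, f s ∂impulseMeasure a b θs := fun {t f} hf => by
    rw [setIntegral_impulseMeasure ha hb (hfin _ _) hf]
    exact congrArg _ (tsum_subtype_eq_finsum_mem (hfin τ t) fun k => b * f (θs k))
  have hbound := le_impulsiveGronwallBound hfin (strictMono_of_gap hθ0 hgap) ha hb hhc
    (fun t => integrableOn_impulseMeasure (hfin τ t) (huint t))
    (fun t ht => by rw [← hsplit (huint t), ← add_assoc]; exact hineq t ht) ht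
  rw [impulsiveGronwallBound,
    ← hsplit (integrableOn_impulseKernel_left_mul hfin ha hb hhc t τ t)] at hbound
  simp only [impulseKernel, mul_assoc, add_assoc] at hbound ⊢
  exact hbound

theorem stmt_12 (a b θ0 τ : ℝ) (ha : 0 ≤ a) (hb : 0 ≤ b) (hθ0 : 0 < θ0)
    (θs : ℤ → ℝ) (hmono : StrictMono θs) (hgap : ∀ k : ℤ, θ0 ≤ θs (k + 1) - θs k)
    (u h : ℝ → ℝ) (hu0 : ∀ t, 0 ≤ u t) (hh0 : ∀ t, 0 ≤ h t) (hhc : Continuous h)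
    (huint : ∀ t, IntegrableOn u (Set.Ioc τ t))
    (hineq : ∀ t, τ ≤ t → u t ≤ h t + (∫ s in Set.Ioc τ t, a * u s) +
      ∑' k : {k : ℤ // τ < θs k ∧ θs k < t}, b * u (θs k)) :
    ∀ t, τ ≤ t → u t ≤ h t +
      (∫ s in Set.Ioc τ t,
        a * (1 + b) ^ ({j : ℤ | s < θs j ∧ θs j < t}.ncard) * Real.exp (a * (t - s)) * h s) +
      ∑' k : {k : ℤ // τ < θs k ∧ θs k < t},
        b * (1 + b) ^ ({j : ℤ | θs k < θs j ∧ θs j < t}.ncard) *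
          Real.exp (a * (t - θs k)) * h (θs k) :=
  stmt_12_general a b θ0 τ ha hb hθ0 θs hgap u h hhc huint hineq
end

section
/- Let $a,b\ge0$, $\tau\in\mathbb{R}$, and $\{\theta_k\}$ strictly increasing with gaps $\ge\theta>0$. For all $t>\tau$, the identity $1 + \int_\tau^t a(1+b)^{i((s,t))} e^{a(t-s)}\,ds + \sum_{\tau<\theta_k<t} b(1+b)^{i((\theta_k,t))} e^{a(t-\theta_k)} = (1+b)^{i((\tau,t))} e^{a(t-\tau)}$ holds, where $i((x,y))$ counts terms $\theta_k$ in $(x,y)$. -/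
/-!
Write `R x = (1 + b) ^ i((x, t)) * exp (a * (t - x))`. Between consecutive points `θ k` the count
is constant and `R' = -a R`, so the integral over such a gap is the drop of `R` across it; at a point
`θ k` the count drops by one when passing to the right, so `R` jumps by exactly `b * R (θ k)`.
Adding the drops over the gaps and the jumps at the finitely many points in `(τ, t)` telescopes from
`R t = 1` to `R τ`, by induction on the set of points, peeling off the leftmost one.
The gap condition makes `θ` tend to `±∞` along `ℤ`, so only finitely many points lie in `(τ, t)`.
-/

open MeasureTheory Filter Set

/-- `i((x, y))` of the paper is `(pointsIn θ x y).ncard`. -/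
def pointsIn {ι : Type*} (θ : ι → ℝ) (x y : ℝ) : Set ι := {k | x < θ k ∧ θ k < y}

theorem integral_Ioc_mul_exp (a c t : ℝ) {x y : ℝ} (hxy : x ≤ y) :
    ∫ s in Ioc x y, a * c * Real.exp (a * (t - s)) =
      c * Real.exp (a * (t - x)) - c * Real.exp (a * (t - y)) := by
  rw [← intervalIntegral.integral_of_le hxy]
  have hderiv (u : ℝ) : HasDerivAt (fun s => -(c * Real.exp (a * (t - s))))
      (a * c * Real.exp (a * (t - u))) u := by
    refine ((((hasDerivAt_id' u).const_sub t).const_mul a).exp.const_mul c).neg.congr_deriv ?_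
    ring
  rw [intervalIntegral.integral_eq_sub_of_hasDerivAt (fun u _ => hderiv u)
    (by apply Continuous.intervalIntegrable; fun_prop)]
  ring

section Renewal

variable {ι : Type*} {θ : ι → ℝ} (a b : ℝ) {t : ℝ}

theorem pointsIn_eq_of_forall_lt {τ s y : ℝ} (hτs : τ ≤ s) (h : ∀ k ∈ pointsIn θ τ y, s < θ k) :
    pointsIn θ s y = pointsIn θ τ y :=
  Subset.antisymm (fun _ hk => ⟨hτs.trans_lt hk.1, hk.2⟩) fun k hk => ⟨h k hk, hk.2⟩

theorem pointsIn_eq_of_eq_insert (hθ : Function.Injective θ) {τ y : ℝ} {m : ι} {S : Set ι}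
    (h : pointsIn θ τ y = insert m S) (hmS : m ∉ S) (hmin : ∀ k ∈ S, θ m ≤ θ k) :
    pointsIn θ (θ m) y = S := by
  have hm : m ∈ pointsIn θ τ y := h ▸ mem_insert m S
  ext k
  constructor
  · intro hk
    have hkτ : k ∈ pointsIn θ τ y := ⟨hm.1.trans hk.1, hk.2⟩
    rw [h] at hkτ
    exact hkτ.resolve_left fun hkm => (hkm ▸ hk.1).false
  · intro hkS
    have hkτ : k ∈ pointsIn θ τ y := h ▸ mem_insert_of_mem m hkS
    exact ⟨(hmin k hkS).lt_of_ne fun hmk => hmS (hθ hmk ▸ hkS), hkτ.2⟩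

theorem integrableOn_and_integral_Ioc_of_ncard_eq {x y : ℝ} (hxy : x ≤ y) {n : ℕ}
    (hn : ∀ s ∈ Ioo x y, (pointsIn θ s t).ncard = n) :
    IntegrableOn (fun s => a * (1 + b) ^ (pointsIn θ s t).ncard * Real.exp (a * (t - s)))
        (Ioc x y) ∧
      ∫ s in Ioc x y, a * (1 + b) ^ (pointsIn θ s t).ncard * Real.exp (a * (t - s)) =
        (1 + b) ^ n * Real.exp (a * (t - x)) - (1 + b) ^ n * Real.exp (a * (t - y)) := by
  have heq : EqOn (fun s => a * (1 + b) ^ (pointsIn θ s t).ncard * Real.exp (a * (t - s)))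
      (fun s => a * (1 + b) ^ n * Real.exp (a * (t - s))) (Ioo x y) := fun s hs => by
    simp only [hn s hs]
  constructor
  · rw [integrableOn_Ioc_iff_integrableOn_Ioo]
    refine IntegrableOn.congr_fun ?_ heq.symm measurableSet_Ioo
    exact (Continuous.integrableOn_Icc (by fun_prop)).mono_set Ioo_subset_Icc_self
  · rw [integral_Ioc_eq_integral_Ioo, setIntegral_congr_fun measurableSet_Ioo heq,
      ← integral_Ioc_eq_integral_Ioo, integral_Ioc_mul_exp a _ t hxy]

theorem integrableOn_and_renewal_identity [DecidableEq ι] (hθ : Function.Injective θ)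
    (S : Finset ι) : ∀ τ ≤ t, pointsIn θ τ t = S →
    IntegrableOn (fun s => a * (1 + b) ^ (pointsIn θ s t).ncard * Real.exp (a * (t - s)))
        (Ioc τ t) ∧
      1 + (∫ s in Ioc τ t, a * (1 + b) ^ (pointsIn θ s t).ncard * Real.exp (a * (t - s))) +
        (∑' k : pointsIn θ τ t,
          b * (1 + b) ^ (pointsIn θ (θ k) t).ncard * Real.exp (a * (t - θ k))) =
        (1 + b) ^ (pointsIn θ τ t).ncard * Real.exp (a * (t - τ)) := by
  induction S using Finset.induction_on_min_value θ with
  | empty =>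
    intro τ hτ hS
    have hempty (s) (hs : s ∈ Ioo τ t) : (pointsIn θ s t).ncard = 0 := by
      rw [pointsIn_eq_of_forall_lt hs.1.le (by simp [hS]), hS, Finset.coe_empty, ncard_empty]
    obtain ⟨hint, hval⟩ := integrableOn_and_integral_Ioc_of_ncard_eq a b hτ hempty
    refine ⟨hint, ?_⟩
    rw [hval, hS, Finset.coe_empty, tsum_empty, ncard_empty]
    simp
  | insert m S hmS hmin ih =>
    intro τ _ hS
    rw [Finset.coe_insert] at hS
    have hm : m ∈ pointsIn θ τ t := hS ▸ mem_insert m _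
    have hnext : pointsIn θ (θ m) t = S := pointsIn_eq_of_eq_insert hθ hS hmS hmin
    have hfirst (s) (hs : s ∈ Ioo τ (θ m)) : (pointsIn θ s t).ncard = S.card + 1 := by
      have hleft : ∀ k ∈ pointsIn θ τ t, s < θ k := by
        rw [hS]
        rintro k (rfl | hkS)
        exacts [hs.2, hs.2.trans_le (hmin k hkS)]
      rw [pointsIn_eq_of_forall_lt hs.1.le hleft, hS, ← Finset.coe_insert, ncard_coe_finset,
        Finset.card_insert_of_notMem hmS]
    obtain ⟨hint₁, hval₁⟩ := integrableOn_and_integral_Ioc_of_ncard_eq a b hm.1.le hfirst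
    obtain ⟨hint₂, hid₂⟩ := ih (θ m) hm.2.le hnext
    rw [← Ioc_union_Ioc_eq_Ioc hm.1.le hm.2.le]
    refine ⟨hint₁.union hint₂, ?_⟩
    have htsum (T : Finset ι) := Finset.tsum_subtype' T
      fun k => b * (1 + b) ^ (pointsIn θ (θ k) t).ncard * Real.exp (a * (t - θ k))
    rw [setIntegral_union (Ioc_disjoint_Ioc_of_le le_rfl) measurableSet_Ioc hint₁ hint₂, hval₁,
      hS, ← Finset.coe_insert, htsum, Finset.sum_insert hmS, Set.ncard_coe_finset,
      Finset.card_insert_of_notMem hmS, hnext, Set.ncard_coe_finset]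
    rw [hnext, htsum, Set.ncard_coe_finset] at hid₂
    linear_combination hid₂

theorem renewal_identity (hθ : Function.Injective θ) {τ : ℝ} (hτ : τ ≤ t)
    (hfin : (pointsIn θ τ t).Finite) :
    1 + (∫ s in Ioc τ t, a * (1 + b) ^ (pointsIn θ s t).ncard * Real.exp (a * (t - s))) +
        (∑' k : pointsIn θ τ t,
          b * (1 + b) ^ (pointsIn θ (θ k) t).ncard * Real.exp (a * (t - θ k))) =
      (1 + b) ^ (pointsIn θ τ t).ncard * Real.exp (a * (t - τ)) := by
  classical
  exact (integrableOn_and_renewal_identity a b hθ hfin.toFinset τ hτ hfin.coe_toFinset.symm).2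

end Renewal

theorem sub_mul_le_sub_of_forall_le_sub_succ {θ : ℤ → ℝ} {δ : ℝ}
    (hgap : ∀ k, δ ≤ θ (k + 1) - θ k) {k l : ℤ} (hkl : k ≤ l) :
    ((l : ℝ) - k) * δ ≤ θ l - θ k := by
  induction l, hkl using Int.leInduction with
  | base => simp
  | succ n _ ih => push_cast; linarith [hgap n]

theorem tendsto_cofinite_cocompact_of_forall_le_sub_succ {θ : ℤ → ℝ} {δ : ℝ} (hδ : 0 < δ)
    (hgap : ∀ k, δ ≤ θ (k + 1) - θ k) : Tendsto θ cofinite (cocompact ℝ) := by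
  rw [Int.cofinite_eq, cocompact_eq_atBot_atTop]
  refine Tendsto.sup_sup ?_ ?_
  · refine tendsto_atBot_mono' _ ((eventually_le_atBot 0).mono fun k hk => ?_)
      (tendsto_atBot_add_const_left _ (θ 0)
        ((tendsto_intCast_atBot_iff.mpr tendsto_id).atBot_mul_const hδ))
    show _ ≤ θ 0 + (k : ℝ) * δ
    have := sub_mul_le_sub_of_forall_le_sub_succ hgap hk
    push_cast at this
    linarith
  · refine tendsto_atTop_mono' _ ((eventually_ge_atTop 0).mono fun k hk => ?_)
      (tendsto_atTop_add_const_left _ (θ 0) (tendsto_intCast_atTop_atTop.atTop_mul_const hδ))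
    have := sub_mul_le_sub_of_forall_le_sub_succ hgap hk
    push_cast at this
    linarith

theorem finite_pointsIn {θ : ℤ → ℝ} (h : Tendsto θ cofinite (cocompact ℝ)) (x y : ℝ) :
    (pointsIn θ x y).Finite :=
  (tendsto_cofinite_cocompact_iff.mp h _ isCompact_Icc).subset fun _ hk => ⟨hk.1.le, hk.2.le⟩

theorem stmt_13_general (a b θ0 τ : ℝ) (hθ0 : 0 < θ0)
    (θs : ℤ → ℝ) (hmono : StrictMono θs) (hgap : ∀ k : ℤ, θ0 ≤ θs (k + 1) - θs k)
    (t : ℝ) (ht : τ < t) :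
    1 + (∫ s in Set.Ioc τ t,
        a * (1 + b) ^ ({j : ℤ | s < θs j ∧ θs j < t}.ncard) * Real.exp (a * (t - s))) +
      (∑' k : {k : ℤ // τ < θs k ∧ θs k < t},
        b * (1 + b) ^ ({j : ℤ | θs k < θs j ∧ θs j < t}.ncard) * Real.exp (a * (t - θs k)))
      = (1 + b) ^ ({j : ℤ | τ < θs j ∧ θs j < t}.ncard) * Real.exp (a * (t - τ)) :=
  renewal_identity a b hmono.injective ht.le
    (finite_pointsIn (tendsto_cofinite_cocompact_of_forall_le_sub_succ hθ0 hgap) τ t)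

theorem stmt_13 (a b θ0 τ : ℝ) (ha : 0 ≤ a) (hb : 0 ≤ b) (hθ0 : 0 < θ0)
    (θs : ℤ → ℝ) (hmono : StrictMono θs) (hgap : ∀ k : ℤ, θ0 ≤ θs (k + 1) - θs k)
    (t : ℝ) (ht : τ < t) :
    1 + (∫ s in Set.Ioc τ t,
        a * (1 + b) ^ ({j : ℤ | s < θs j ∧ θs j < t}.ncard) * Real.exp (a * (t - s))) +
      (∑' k : {k : ℤ // τ < θs k ∧ θs k < t},
        b * (1 + b) ^ ({j : ℤ | θs k < θs j ∧ θs j < t}.ncard) * Real.exp (a * (t - θs k)))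
      = (1 + b) ^ ({j : ℤ | τ < θs j ∧ θs j < t}.ncard) * Real.exp (a * (t - τ)) :=
  stmt_13_general a b θ0 τ hθ0 θs hmono hgap t ht
end
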